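/- arXiv:1508.01845 — 2 statements merged into one kernel-verified Lean document; each statement's English description precedes it below -/
import Mathlib

section
/- Let $(X_n)_{n \ge 0}$ be a convolution random walk on a countable group $\Gamma$ started at the identity, let $k \ge 0$, and let $M$ be a random finite subset of $\Gamma$ measurable with respect to $(X_1, \ldots, X_k)$. Then for every $m_0 \ge 1$, $\mathbb{P}\big[|\{t \ge 0 : X_t \in M\}| > k + m_0\big] \le \mathbb{E}[|M|] \cdot \sum_{j \ge m_0} \sup_{x \in \Gamma} p_j(o, x)$. -/
open MeasureTheory ProbabilityTheory Filter
open scoped ENNReal NNReal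
set_option linter.unusedSectionVars false
set_option maxHeartbeats 1000000

section Aux
variable {Γ : Type*} [Group Γ] [Countable Γ] [MeasurableSpace Γ] [MeasurableSingletonClass Γ]
variable {Ω : Type*} [MeasurableSpace Ω]

lemma aux_measurableSet (s : Set Γ) : MeasurableSet s := s.to_countable.measurableSet

lemma aux_mul_meas {f g : Ω → Γ} (hf : Measurable f) (hg : Measurable g) :
    Measurable (fun ω => f ω * g ω) :=
  (measurable_of_countable (fun p : Γ × Γ => p.1 * p.2)).comp (hf.prodMk hg)

lemma aux_list_prod_meas (f : ℕ → Ω → Γ) (hf : ∀ n, Measurable (f n)) (l : List ℕ) :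
    Measurable (fun ω => (l.map (fun i => f i ω)).prod) := by
  induction l with
  | nil => simp
  | cons a l ih =>
    simp only [List.map_cons, List.prod_cons]
    exact aux_mul_meas (hf a) ih

lemma aux_indep (P : Measure Ω) (Y : ℕ → Ω → Γ)
    (hYmeas : ∀ n, Measurable (Y n)) (hYindep : iIndepFun Y P)
    (S T : Finset ℕ) (hST : Disjoint S T) {α β : Type*} [MeasurableSpace α] [MeasurableSpace β]
    (φ : ((i : S) → Γ) → α) (ψ : ((i : T) → Γ) → β) (hφ : Measurable φ) (hψ : Measurable ψ) :
    IndepFun (fun ω => φ (fun i => Y i ω)) (fun ω => ψ (fun i => Y i ω)) P :=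
  (hYindep.indepFun_finset S T hST hYmeas).comp hφ hψ

lemma aux_step (P : Measure Ω) [IsProbabilityMeasure P] (μ : Measure Γ) (Y : ℕ → Ω → Γ)
    (hYmeas : ∀ n, Measurable (Y n)) (hYindep : iIndepFun Y P)
    (hYlaw : ∀ n, Measure.map (Y n) P = μ) (m a : ℕ) :
    Measure.map (fun ω => ((List.range (m+1)).map (fun i => Y (a+i+1) ω)).prod) P
      = Measure.map (fun p : Γ × Γ => p.1 * p.2)
          ((Measure.map (fun ω => ((List.range m).map (fun i => Y (a+i+1) ω)).prod) P).prod μ) := by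
  have hZ : Measurable (fun ω => ((List.range m).map (fun i => Y (a+i+1) ω)).prod) :=
    aux_list_prod_meas (fun n => Y (a+n+1)) (fun n => hYmeas _) _
  have hindep : IndepFun (fun ω => ((List.range m).map (fun i => Y (a+i+1) ω)).prod)
      (Y (a+m+1)) P := by
    have hd : Disjoint (Finset.Ioc a (a+m)) ({a+m+1} : Finset ℕ) := by
      simp [Finset.disjoint_singleton_right, Finset.mem_Ioc]
    have := aux_indep P Y hYmeas hYindep (Finset.Ioc a (a+m)) {a+m+1} hd
      (fun g => ((List.range m).map
        (fun i => if h : a+i+1 ∈ Finset.Ioc a (a+m) then g ⟨a+i+1, h⟩ else 1)).prod)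
      (fun g => g ⟨a+m+1, Finset.mem_singleton_self _⟩)
      (measurable_of_countable _) (measurable_of_countable _)
    convert this using 1
    · funext ω
      congr 1
      refine List.map_congr_left (fun i hi => ?_)
      have : a + i + 1 ∈ Finset.Ioc a (a+m) := by
        simp only [List.mem_range] at hi
        simp only [Finset.mem_Ioc]
        omega
      simp [this]
  have hpair : Measure.map (fun ω => (((List.range m).map (fun i => Y (a+i+1) ω)).prod,
      Y (a+m+1) ω)) P
      = (Measure.map (fun ω => ((List.range m).map (fun i => Y (a+i+1) ω)).prod) P).prod μ := by
    rw [← hYlaw (a+m+1)]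
    exact (indepFun_iff_map_prod_eq_prod_map_map hZ.aemeasurable
      (hYmeas _).aemeasurable).mp hindep
  have heq : (fun ω => ((List.range (m+1)).map (fun i => Y (a+i+1) ω)).prod)
      = (fun p : Γ × Γ => p.1 * p.2) ∘ (fun ω => (((List.range m).map
          (fun i => Y (a+i+1) ω)).prod, Y (a+m+1) ω)) := by
    funext ω
    simp [List.range_succ]
  rw [heq, ← Measure.map_map (measurable_of_countable _) (hZ.prodMk (hYmeas _)), hpair]

lemma aux_law (P : Measure Ω) [IsProbabilityMeasure P] (μ : Measure Γ) (Y : ℕ → Ω → Γ)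
    (hYmeas : ∀ n, Measurable (Y n)) (hYindep : iIndepFun Y P)
    (hYlaw : ∀ n, Measure.map (Y n) P = μ) (m a b : ℕ) :
    Measure.map (fun ω => ((List.range m).map (fun i => Y (a+i+1) ω)).prod) P
      = Measure.map (fun ω => ((List.range m).map (fun i => Y (b+i+1) ω)).prod) P := by
  induction m with
  | zero => simp
  | succ m ih =>
    rw [aux_step P μ Y hYmeas hYindep hYlaw m a, aux_step P μ Y hYmeas hYindep hYlaw m b, ih]

lemma aux_main (P : Measure Ω) [IsProbabilityMeasure P] (μ : Measure Γ) (Y : ℕ → Ω → Γ)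
    (hYmeas : ∀ n, Measurable (Y n)) (hYindep : iIndepFun Y P)
    (hYlaw : ∀ n, Measure.map (Y n) P = μ)
    (X : ℕ → Ω → Γ)
    (hX : ∀ n ω, X n ω = ((List.range n).map (fun i => Y (i + 1) ω)).prod)
    (k : ℕ) (M : Ω → Finset Γ) (F : (Fin k → Γ) → Finset Γ)
    (hF : ∀ ω, M ω = F (fun i => X ((i : ℕ) + 1) ω)) (m : ℕ) :
    P {ω | X (k + m) ω ∈ M ω} ≤
      (∫⁻ ω, ((M ω).card : ℝ≥0∞) ∂P) * ⨆ x : Γ, P {ω | X m ω = x} := by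
  classical
  have hXmeas : ∀ n, Measurable (X n) := by
    intro n
    have : X n = fun ω => ((List.range n).map (fun i => Y (i + 1) ω)).prod := by
      funext ω; exact hX n ω
    rw [this]
    exact aux_list_prod_meas (fun i => Y (i+1)) (fun i => hYmeas _) _
  set V : Ω → (Fin k → Γ) := fun ω i => X ((i : ℕ) + 1) ω with hV
  set W : Ω → Γ := fun ω => ((List.range m).map (fun i => Y (k+i+1) ω)).prod with hW
  have hVmeas : Measurable V :=
    measurable_pi_lambda _ (fun i => hXmeas _)
  have hWmeas : Measurable W :=
    aux_list_prod_meas (fun n => Y (k+n+1)) (fun n => hYmeas _) _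
  set s : ℝ≥0∞ := ⨆ x : Γ, P {ω | X m ω = x} with hs
  -- law of W equals law of X m
  have hlawW : ∀ x : Γ, P {ω | W ω = x} = P {ω | X m ω = x} := by
    intro x
    have h1 : P {ω | W ω = x} = Measure.map W P {x} := by
      rw [Measure.map_apply hWmeas (measurableSet_singleton x)]
      rfl
    have h2 : P {ω | X m ω = x} = Measure.map (X m) P {x} := by
      rw [Measure.map_apply (hXmeas m) (measurableSet_singleton x)]
      rfl
    have hXm : Measure.map (X m) P
        = Measure.map (fun ω => ((List.range m).map (fun i => Y (0+i+1) ω)).prod) P := by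
      congr 1
      funext ω
      rw [hX m ω]
      simp [Nat.zero_add]
    rw [h1, h2, hXm, ← aux_law P μ Y hYmeas hYindep hYlaw m k 0]
  have hWle : ∀ x : Γ, P {ω | W ω = x} ≤ s := by
    intro x
    rw [hlawW x, hs]
    exact le_iSup (fun x : Γ => P {ω | X m ω = x}) x
  -- decomposition of X (k+m)
  have hdecomp : ∀ ω, X (k + m) ω = X k ω * W ω := by
    intro ω
    rw [hX (k+m) ω, hX k ω]
    simp only [List.range_add, List.map_append, List.prod_append, List.map_map]
    rfl
  -- X k as a function of V
  set H : (Fin k → Γ) → Γ := fun v => if h : 0 < k then v ⟨k-1, by omega⟩ else 1 with hH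
  have hHV : ∀ ω, X k ω = H (V ω) := by
    intro ω
    rcases Nat.eq_zero_or_pos k with hk | hk
    · subst hk
      simp [hH, hX 0 ω]
    · simp only [hH, dif_pos hk, hV]
      congr 1
      omega
  set g : (Fin k → Γ) → Finset Γ := fun v => (F v).image (fun y => (H v)⁻¹ * y) with hg
  have hmem : ∀ ω, (X (k + m) ω ∈ M ω) ↔ W ω ∈ g (V ω) := by
    intro ω
    rw [hF ω, hdecomp ω, hHV ω]
    simp only [hg, Finset.mem_image]
    constructor
    · intro h
      exact ⟨H (V ω) * W ω, h, by group⟩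
    · rintro ⟨y, hy, hEq⟩
      have : H (V ω) * W ω = y := by rw [← hEq]; group
      rw [this]
      exact hy
  have hindepVW : IndepFun V W P := by
    set S : Finset ℕ := Finset.range (k+1) with hS
    set T : Finset ℕ := Finset.Ioc k (k+m) with hT
    have hd : Disjoint S T := by
      rw [Finset.disjoint_left]
      intro n hn hn'
      simp only [hS, Finset.mem_range] at hn
      simp only [hT, Finset.mem_Ioc] at hn'
      omega
    have := aux_indep P Y hYmeas hYindep S T hd
      (fun gg (i : Fin k) => ((List.range ((i : ℕ)+1)).map
        (fun j => if h : j+1 ∈ S then gg ⟨j+1, h⟩ else 1)).prod)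
      (fun gg => ((List.range m).map
        (fun j => if h : k+j+1 ∈ T then gg ⟨k+j+1, h⟩ else 1)).prod)
      (measurable_of_countable _) (measurable_of_countable _)
    convert this using 1
    · funext ω
      funext i
      simp only [hV]
      rw [hX ((i:ℕ)+1) ω]
      congr 1
      refine List.map_congr_left (fun j hj => ?_)
      have hjS : j + 1 ∈ S := by
        simp only [List.mem_range] at hj
        simp only [hS, Finset.mem_range]
        have := i.2
        omega
      simp [hjS]
    · funext ω
      simp only [hW]
      congr 1
      refine List.map_congr_left (fun j hj => ?_)
      have hjT : k + j + 1 ∈ T := by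
        simp only [List.mem_range] at hj
        simp only [hT, Finset.mem_Ioc]
        omega
      simp [hjT]
  -- union bound over values of V
  have hset : {ω | X (k + m) ω ∈ M ω} = ⋃ v : Fin k → Γ, (V ⁻¹' {v} ∩ W ⁻¹' ↑(g v)) := by
    ext ω
    simp only [Set.mem_setOf_eq, hmem ω, Set.mem_iUnion, Set.mem_inter_iff, Set.mem_preimage,
      Set.mem_singleton_iff, Finset.coe_sort_coe, Finset.mem_coe]
    constructor
    · intro h; exact ⟨V ω, rfl, h⟩
    · rintro ⟨v, rfl, h⟩; exact h
  calc P {ω | X (k + m) ω ∈ M ω}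
      ≤ ∑' v : Fin k → Γ, P (V ⁻¹' {v} ∩ W ⁻¹' ↑(g v)) := by
        rw [hset]; exact measure_iUnion_le _
    _ ≤ ∑' v : Fin k → Γ, P (V ⁻¹' {v}) * (((F v).card : ℝ≥0∞) * s) := by
        refine ENNReal.tsum_le_tsum (fun v => ?_)
        rw [hindepVW.measure_inter_preimage_eq_mul _ _ (MeasurableSet.singleton v)
          (aux_measurableSet _)]
        refine mul_le_mul_right ?_ _
        have hcover : (↑(g v) : Set Γ) = ⋃ z ∈ g v, {z} :=
          (Set.biUnion_of_singleton (↑(g v) : Set Γ)).symm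
        calc P (W ⁻¹' ↑(g v)) ≤ ∑ z ∈ g v, P (W ⁻¹' {z}) := by
              rw [hcover, Set.preimage_iUnion₂]
              exact measure_biUnion_finset_le _ _
          _ ≤ ∑ _z ∈ g v, s := by
              refine Finset.sum_le_sum (fun z _ => ?_)
              have : W ⁻¹' {z} = {ω | W ω = z} := rfl
              rw [this]; exact hWle z
          _ = ((g v).card : ℝ≥0∞) * s := by
              rw [Finset.sum_const, nsmul_eq_mul]
          _ ≤ ((F v).card : ℝ≥0∞) * s := by
              refine mul_le_mul_left ?_ _
              exact_mod_cast Nat.cast_le.mpr (Finset.card_image_le)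
    _ = (∑' v : Fin k → Γ, ((F v).card : ℝ≥0∞) * P (V ⁻¹' {v})) * s := by
        rw [← ENNReal.tsum_mul_right]
        congr 1
        funext v
        ring
    _ = (∫⁻ ω, ((M ω).card : ℝ≥0∞) ∂P) * s := by
        congr 1
        have : ∫⁻ ω, ((M ω).card : ℝ≥0∞) ∂P
            = ∫⁻ ω, ((F (V ω)).card : ℝ≥0∞) ∂P := by
          refine lintegral_congr (fun ω => ?_)
          rw [hF ω]
        rw [this, ← lintegral_map (f := fun v => ((F v).card : ℝ≥0∞))
          (measurable_of_countable _) hVmeas, lintegral_countable' (μ := Measure.map V P)]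
        refine tsum_congr (fun v => ?_)
        rw [Measure.map_apply hVmeas (MeasurableSet.singleton v)]

end Aux

theorem stmt_5
    {Γ : Type*} [Group Γ] [Countable Γ] [MeasurableSpace Γ] [MeasurableSingletonClass Γ]
    {Ω : Type*} [MeasurableSpace Ω] (P : Measure Ω) [IsProbabilityMeasure P]
    (μ : Measure Γ) (Y : ℕ → Ω → Γ) (hYmeas : ∀ n, Measurable (Y n))
    (hYindep : iIndepFun Y P)
    (hYlaw : ∀ n, Measure.map (Y n) P = μ)
    (X : ℕ → Ω → Γ)
    (hX : ∀ n ω, X n ω = ((List.range n).map (fun i => Y (i + 1) ω)).prod)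
    (k : ℕ)
    (M : Ω → Finset Γ)
    (hM : ∃ F : (Fin k → Γ) → Finset Γ, ∀ ω, M ω = F (fun i => X ((i : ℕ) + 1) ω))
    (m₀ : ℕ) (hm₀ : 1 ≤ m₀) :
    P {ω | ((k + m₀ : ℕ) : ℝ≥0∞) < {t : ℕ | X t ω ∈ M ω}.encard} ≤
      (∫⁻ ω, ((M ω).card : ℝ≥0∞) ∂P) *
        ∑' j : ℕ, if m₀ ≤ j then ⨆ x : Γ, P {ω | X j ω = x} else 0 := by
  obtain ⟨F, hF⟩ := hM
  set I : ℝ≥0∞ := ∫⁻ ω, ((M ω).card : ℝ≥0∞) ∂P with hI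
  set s : ℕ → ℝ≥0∞ := fun j => ⨆ x : Γ, P {ω | X j ω = x} with hsdef
  have hsub : {ω | ((k + m₀ : ℕ) : ℝ≥0∞) < {t : ℕ | X t ω ∈ M ω}.encard}
      ⊆ ⋃ j : ℕ, {ω | X (k + m₀ + j) ω ∈ M ω} := by
    intro ω hω
    simp only [Set.mem_setOf_eq] at hω
    by_contra hc
    simp only [Set.mem_iUnion, Set.mem_setOf_eq, not_exists] at hc
    have hsubs : {t : ℕ | X t ω ∈ M ω} ⊆ ↑(Finset.range (k + m₀)) := by
      intro t ht
      simp only [Set.mem_setOf_eq] at ht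
      simp only [Finset.coe_range, Set.mem_Iio]
      by_contra htlt
      push_neg at htlt
      exact hc (t - (k + m₀)) (by rwa [show k + m₀ + (t - (k + m₀)) = t by omega])
    have hcard : {t : ℕ | X t ω ∈ M ω}.encard ≤ (k + m₀ : ℕ) := by
      calc {t : ℕ | X t ω ∈ M ω}.encard ≤ (↑(Finset.range (k + m₀)) : Set ℕ).encard :=
            Set.encard_mono hsubs
        _ = ((k + m₀ : ℕ) : ℕ∞) := by
            rw [Set.encard_coe_eq_coe_finsetCard, Finset.card_range]
    have : (({t : ℕ | X t ω ∈ M ω}.encard : ℕ∞) : ℝ≥0∞) ≤ ((k + m₀ : ℕ) : ℝ≥0∞) := by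
      exact_mod_cast hcard
    exact absurd hω (not_lt.mpr this)
  calc P {ω | ((k + m₀ : ℕ) : ℝ≥0∞) < {t : ℕ | X t ω ∈ M ω}.encard}
      ≤ P (⋃ j : ℕ, {ω | X (k + m₀ + j) ω ∈ M ω}) := measure_mono hsub
    _ ≤ ∑' j : ℕ, P {ω | X (k + m₀ + j) ω ∈ M ω} := measure_iUnion_le _
    _ ≤ ∑' j : ℕ, I * s (m₀ + j) := by
        refine ENNReal.tsum_le_tsum (fun j => ?_)
        have := aux_main P μ Y hYmeas hYindep hYlaw X hX k M F hF (m₀ + j)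
        rwa [show k + (m₀ + j) = k + m₀ + j by omega] at this
    _ = I * ∑' j : ℕ, s (m₀ + j) := ENNReal.tsum_mul_left
    _ ≤ I * ∑' j : ℕ, (if m₀ ≤ j then s j else 0) := by
        refine mul_le_mul_right ?_ I
        have : ∀ j : ℕ, s (m₀ + j) = (fun n => if m₀ ≤ n then s n else 0) (m₀ + j) := by
          intro j
          simp [Nat.le_add_right]
        calc ∑' j : ℕ, s (m₀ + j)
            = ∑' j : ℕ, (fun n => if m₀ ≤ n then s n else 0) (m₀ + j) := tsum_congr this
          _ ≤ ∑' n : ℕ, (if m₀ ≤ n then s n else 0) :=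
              ENNReal.tsum_comp_le_tsum_of_injective (fun a b h => by omega) _
end

section
/- Let $(A_r)_{r \ge 1}$ be events in a probability space such that $\mathbb{P}(A_r) \ge c/r$ and $\mathbb{P}(A_r \cap A_{r+j}) \le C/(rj)$ for all $r, j \ge 1$, where $0 < c \le C < \infty$. Then there is a constant $c' > 0$ (depending only on $c$ and $C$) such that for all sufficiently large $n$, $\mathbb{P}\big(\bigcup_{r=n}^{n^2} A_r\big) \ge c'$. -/
open MeasureTheory Filter
open scoped ENNReal NNReal

lemma log_succ_le (k : ℕ) (hk : 1 ≤ k) :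
    Real.log (k + 1) - Real.log k ≤ 1 / k := by
  have hk0 : (0:ℝ) < k := by exact_mod_cast hk
  have h := Real.log_le_sub_one_of_pos (x := ((k:ℝ) + 1) / k) (by positivity)
  rw [Real.log_div (by positivity) (by positivity)] at h
  have h2 : ((k:ℝ) + 1) / k - 1 = 1 / k := by field_simp; ring
  linarith

lemma log_sum_lower (n : ℕ) (hn : 1 ≤ n) : ∀ m : ℕ, n ≤ m →
    Real.log (m + 1) - Real.log n ≤ ∑ r ∈ Finset.Icc n m, (1 : ℝ) / r := by
  intro m hm
  induction m, hm using Nat.le_induction with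
  | base =>
    rw [Finset.Icc_self, Finset.sum_singleton]
    exact log_succ_le n hn
  | succ m hm ih =>
    rw [Finset.sum_Icc_succ_top (by omega)]
    have h := log_succ_le (m + 1) (by omega)
    push_cast at h ⊢
    linarith

lemma log_sum_upper : ∀ m : ℕ, 1 ≤ m →
    ∑ j ∈ Finset.Icc 1 m, (1 : ℝ) / j ≤ 1 + Real.log m := by
  intro m hm
  induction m, hm using Nat.le_induction with
  | base => simp
  | succ m hm ih =>
    rw [Finset.sum_Icc_succ_top (by omega)]
    have hm0 : (0:ℝ) < m := by exact_mod_cast hm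
    have h := Real.log_le_sub_one_of_pos (x := (m:ℝ) / (m + 1)) (by positivity)
    rw [Real.log_div (by positivity) (by positivity)] at h
    have h2 : (m:ℝ) / (m + 1) - 1 = -(1 / (m + 1)) := by field_simp; ring
    push_cast
    push_cast at ih
    linarith

lemma sum_shift (r m : ℕ) (h : r ≤ m) (f : ℕ → ℝ) :
    ∑ t ∈ Finset.Icc (r + 1) m, f (t - r) = ∑ j ∈ Finset.Icc 1 (m - r), f j := by
  have : Finset.Icc (r + 1) m = Finset.map (addLeftEmbedding r) (Finset.Icc 1 (m - r)) := by
    rw [Finset.map_add_left_Icc]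
    congr 1
    omega
  rw [this, Finset.sum_map]
  refine Finset.sum_congr rfl fun j _ => ?_
  simp [addLeftEmbedding]

lemma cs_lemma {Ω : Type} [MeasurableSpace Ω] (P : Measure Ω) (f : Ω → ℝ≥0∞)
    (hf : Measurable f) (S : Set Ω) (hS : MeasurableSet S)
    (h0 : ∀ ω, ω ∉ S → f ω = 0) :
    (∫⁻ ω, f ω ∂P) ^ 2 ≤ (∫⁻ ω, f ω ^ 2 ∂P) * P S := by
  have hpq : Real.HolderConjugate 2 2 := Real.HolderConjugate.two_two
  have hgm : Measurable (S.indicator (1 : Ω → ℝ≥0∞)) := measurable_one.indicator hS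
  have key := ENNReal.lintegral_mul_le_Lp_mul_Lq P hpq hf.aemeasurable hgm.aemeasurable
  have h1 : ∫⁻ ω, (f * S.indicator (1 : Ω → ℝ≥0∞)) ω ∂P = ∫⁻ ω, f ω ∂P := by
    refine lintegral_congr fun ω => ?_
    rw [Pi.mul_apply]
    by_cases hω : ω ∈ S
    · rw [Set.indicator_of_mem hω, Pi.one_apply, mul_one]
    · rw [h0 ω hω, zero_mul]
  have h2 : ∫⁻ ω, (S.indicator (1 : Ω → ℝ≥0∞)) ω ^ (2:ℝ) ∂P = P S := by
    rw [← lintegral_indicator_one hS]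
    refine lintegral_congr fun ω => ?_
    by_cases hω : ω ∈ S <;>
      simp [Set.indicator_of_mem, Set.indicator_of_notMem, hω,
        ENNReal.zero_rpow_of_pos (by norm_num : (0:ℝ) < 2)]
  have h3 : ∫⁻ ω, f ω ^ (2:ℝ) ∂P = ∫⁻ ω, f ω ^ 2 ∂P := by
    refine lintegral_congr fun ω => ?_
    rw [← ENNReal.rpow_natCast (f ω) 2]
    norm_num
  rw [h1, h2, h3] at key
  have hsq : ∀ x : ℝ≥0∞, (x ^ ((1:ℝ)/2)) ^ 2 = x := by
    intro x
    rw [← ENNReal.rpow_natCast (x ^ ((1:ℝ)/2)) 2, ← ENNReal.rpow_mul]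
    norm_num
  calc (∫⁻ ω, f ω ∂P) ^ 2
      ≤ ((∫⁻ ω, f ω ^ 2 ∂P) ^ ((1:ℝ)/2) * (P S) ^ ((1:ℝ)/2)) ^ 2 :=
        pow_le_pow_left' key 2
    _ = (∫⁻ ω, f ω ^ 2 ∂P) * P S := by
        rw [mul_pow, hsq, hsq]

set_option maxHeartbeats 1000000 in
theorem stmt_14 (c C : ℝ) (hc : 0 < c) (hcC : c ≤ C) :
    ∃ c' : ℝ, 0 < c' ∧
      ∀ (Ω : Type) (_ : MeasurableSpace Ω) (P : Measure Ω),
        IsProbabilityMeasure P →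
        ∀ A : ℕ → Set Ω, (∀ r, MeasurableSet (A r)) →
        (∀ r : ℕ, 1 ≤ r → c / (r : ℝ) ≤ (P (A r)).toReal) →
        (∀ r : ℕ, 1 ≤ r → ∀ j : ℕ, 1 ≤ j →
          (P (A r ∩ A (r + j))).toReal ≤ C / ((r : ℝ) * (j : ℝ))) →
        ∃ N : ℕ, ∀ n ≥ N, c' ≤ (P (⋃ r ∈ Finset.Icc n (n ^ 2), A r)).toReal := by
  have hC : 0 < C := hc.trans_le hcC
  refine ⟨c ^ 2 / (16 * C), by positivity, ?_⟩
  intro Ω mΩ P hP A hA hlow hup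
  refine ⟨21, fun n hn => ?_⟩
  have hn1 : 1 ≤ n := le_trans (by norm_num) hn
  have hnn : n ≤ n ^ 2 := by nlinarith
  have hn0 : (0:ℝ) < n := by exact_mod_cast hn1
  -- log n ≥ 3
  have hL : (3:ℝ) ≤ Real.log n := by
    rw [Real.le_log_iff_exp_le hn0]
    have h1 : Real.exp 1 ≤ 2.7182818286 := le_of_lt Real.exp_one_lt_d9
    have h2 : Real.exp 3 = Real.exp 1 ^ 3 := by
      rw [← Real.exp_nat_mul]; norm_num
    have h21 : (21:ℝ) ≤ n := by exact_mod_cast hn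
    have h3 : Real.exp 1 ^ 3 ≤ 2.7182818286 ^ 3 :=
      pow_le_pow_left₀ (Real.exp_pos 1).le h1 3
    have h4 : (2.7182818286:ℝ) ^ 3 ≤ 21 := by norm_num
    linarith
  set L := Real.log n with hLdef
  set s := Finset.Icc n (n ^ 2) with hsdef
  set H := ∑ r ∈ s, (1:ℝ) / r with hHdef
  set T := ∑ j ∈ Finset.Icc 1 (n ^ 2), (1:ℝ) / j with hTdef
  -- harmonic bounds
  have hHL : L ≤ H := by
    have h1 := log_sum_lower n hn1 (n ^ 2) hnn
    have h2 : Real.log (((n:ℝ)) ^ 2) = 2 * L := by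
      rw [Real.log_pow]; push_cast; ring
    have h3 : Real.log (((n:ℝ)) ^ 2) ≤ Real.log ((n ^ 2 : ℕ) + 1) := by
      apply Real.log_le_log (by positivity)
      push_cast; nlinarith
    push_cast at h1 h3
    push_cast
    linarith
  have hTle : T ≤ 1 + 2 * L := by
    have h1 := log_sum_upper (n ^ 2) (by nlinarith)
    have h2 : Real.log ((n ^ 2 : ℕ) : ℝ) = 2 * L := by
      push_cast [Real.log_pow]; ring
    linarith
  have hH3 : (3:ℝ) ≤ H := le_trans hL hHL
  have hT0 : (0:ℝ) ≤ T := Finset.sum_nonneg fun j _ => by positivity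
  -- probability setup
  set S := ⋃ r ∈ s, A r with hSdef
  have hSmeas : MeasurableSet S :=
    MeasurableSet.biUnion s.countable_toSet fun r _ => hA r
  set Z : Ω → ℝ≥0∞ := fun ω => ∑ r ∈ s, (A r).indicator 1 ω with hZdef
  have hZmeas : Measurable Z :=
    Finset.measurable_sum _ fun r _ => measurable_one.indicator (hA r)
  have hZ0 : ∀ ω, ω ∉ S → Z ω = 0 := by
    intro ω hω
    refine Finset.sum_eq_zero fun r hr => ?_
    refine Set.indicator_of_notMem (fun hmem => hω ?_) _
    exact Set.mem_biUnion (Finset.mem_coe.mpr hr) hmem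
  have hZ1 : ∫⁻ ω, Z ω ∂P = ∑ r ∈ s, P (A r) := by
    rw [hZdef, lintegral_finset_sum _ fun r _ => measurable_one.indicator (hA r)]
    exact Finset.sum_congr rfl fun r _ => lintegral_indicator_one (hA r)
  have hZ2 : ∫⁻ ω, Z ω ^ 2 ∂P = ∑ r ∈ s, ∑ t ∈ s, P (A r ∩ A t) := by
    have hpt : ∀ ω, Z ω ^ 2 = ∑ r ∈ s, ∑ t ∈ s, (A r ∩ A t).indicator 1 ω := by
      intro ω
      rw [hZdef, sq, Finset.sum_mul_sum]
      refine Finset.sum_congr rfl fun r _ => Finset.sum_congr rfl fun t _ => ?_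
      rw [Set.inter_indicator_one, Pi.mul_apply]
    simp only [hpt]
    rw [lintegral_finset_sum _ fun r _ =>
      Finset.measurable_sum _ fun t _ => measurable_one.indicator ((hA r).inter (hA t))]
    refine Finset.sum_congr rfl fun r _ => ?_
    rw [lintegral_finset_sum _ fun t _ => measurable_one.indicator ((hA r).inter (hA t))]
    exact Finset.sum_congr rfl fun t _ => lintegral_indicator_one ((hA r).inter (hA t))
  have hCS := cs_lemma P Z hZmeas S hSmeas hZ0
  rw [hZ1, hZ2] at hCS
  set m := ∑ r ∈ s, (P (A r)).toReal with hmdef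
  set q := ∑ r ∈ s, ∑ t ∈ s, (P (A r ∩ A t)).toReal with hqdef
  have hqfin : (∑ r ∈ s, ∑ t ∈ s, P (A r ∩ A t)) ≠ ⊤ := by
    exact (ENNReal.sum_lt_top.mpr fun r _ =>
      ENNReal.sum_lt_top.mpr fun t _ => measure_lt_top P _).ne
  have hkey : m ^ 2 ≤ q * (P S).toReal := by
    have h := ENNReal.toReal_mono (ENNReal.mul_ne_top hqfin (measure_ne_top P S)) hCS
    rw [ENNReal.toReal_mul, ENNReal.toReal_pow,
      ENNReal.toReal_sum (fun r _ => measure_ne_top P _)] at h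
    rw [ENNReal.toReal_sum (fun r _ => (ENNReal.sum_lt_top.mpr fun t _ => measure_lt_top P _).ne)] at h
    rw [hmdef, hqdef]
    calc (∑ r ∈ s, (P (A r)).toReal) ^ 2 ≤
        (∑ r ∈ s, (∑ t ∈ s, P (A r ∩ A t)).toReal) * (P S).toReal := h
      _ = _ := by
        rw [Finset.sum_congr rfl fun (r : ℕ) _ =>
          ENNReal.toReal_sum (s := s) (fun t _ => measure_ne_top P (A r ∩ A t))]
  -- lower bound for m
  have hmge : c * H ≤ m := by
    rw [hmdef, hHdef, Finset.mul_sum]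
    refine Finset.sum_le_sum fun r hr => ?_
    have hr1 : 1 ≤ r := le_trans hn1 (Finset.mem_Icc.mp hr).1
    rw [mul_one_div]
    exact hlow r hr1
  -- upper bound for q
  have hqnn : (0:ℝ) ≤ q :=
    Finset.sum_nonneg fun r _ => Finset.sum_nonneg fun t _ => ENNReal.toReal_nonneg
  have hqle : q ≤ m + 2 * (C * H * T) := by
    have hsplit : ∀ r ∈ s, ∑ t ∈ s, (P (A r ∩ A t)).toReal =
        (∑ t ∈ s.filter (fun t => t < r), (P (A r ∩ A t)).toReal) +
        (P (A r ∩ A r)).toReal +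
        ∑ t ∈ s.filter (fun t => r < t), (P (A r ∩ A t)).toReal := by
      intro r hr
      have hins : s.filter (fun t => ¬ t < r) = insert r (s.filter (fun t => r < t)) := by
        ext t
        simp only [Finset.mem_filter, Finset.mem_insert, not_lt]
        constructor
        · rintro ⟨hts, hrt⟩
          rcases eq_or_lt_of_le hrt with h | h
          · exact Or.inl h.symm
          · exact Or.inr ⟨hts, h⟩
        · rintro (rfl | ⟨hts, h⟩)
          · exact ⟨hr, le_refl t⟩
          · exact ⟨hts, h.le⟩
      calc ∑ t ∈ s, (P (A r ∩ A t)).toReal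
          = (∑ t ∈ s.filter (fun t => t < r), (P (A r ∩ A t)).toReal) +
            ∑ t ∈ s.filter (fun t => ¬ t < r), (P (A r ∩ A t)).toReal :=
            (Finset.sum_filter_add_sum_filter_not s _ _).symm
        _ = _ := by
            rw [hins, Finset.sum_insert (by simp)]
            ring
    have hswap : ∑ r ∈ s, ∑ t ∈ s.filter (fun t => t < r), (P (A r ∩ A t)).toReal
        = ∑ r ∈ s, ∑ t ∈ s.filter (fun t => r < t), (P (A r ∩ A t)).toReal := by
      calc ∑ r ∈ s, ∑ t ∈ s.filter (fun t => t < r), (P (A r ∩ A t)).toReal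
          = ∑ r ∈ s, ∑ t ∈ s, if t < r then (P (A r ∩ A t)).toReal else 0 :=
            Finset.sum_congr rfl fun r _ => Finset.sum_filter _ _
        _ = ∑ t ∈ s, ∑ r ∈ s, if t < r then (P (A r ∩ A t)).toReal else 0 :=
            Finset.sum_comm
        _ = ∑ r ∈ s, ∑ t ∈ s, if r < t then (P (A r ∩ A t)).toReal else 0 := by
            refine Finset.sum_congr rfl fun a _ => Finset.sum_congr rfl fun b _ => ?_
            rw [Set.inter_comm]
        _ = ∑ r ∈ s, ∑ t ∈ s.filter (fun t => r < t), (P (A r ∩ A t)).toReal :=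
            (Finset.sum_congr rfl fun r _ => Finset.sum_filter _ _).symm
    have hdiag : ∑ r ∈ s, (P (A r ∩ A r)).toReal = m :=
      Finset.sum_congr rfl fun r _ => by rw [Set.inter_self]
    have hoff : ∀ r ∈ s, ∑ t ∈ s.filter (fun t => r < t), (P (A r ∩ A t)).toReal
        ≤ C / r * T := by
      intro r hr
      obtain ⟨hra, hrb⟩ := Finset.mem_Icc.mp hr
      have hr1 : 1 ≤ r := le_trans hn1 hra
      have hr0 : (0:ℝ) < r := by exact_mod_cast hr1
      calc ∑ t ∈ s.filter (fun t => r < t), (P (A r ∩ A t)).toReal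
          ≤ ∑ t ∈ s.filter (fun t => r < t), C / ((r:ℝ) * ((t - r : ℕ) : ℝ)) := by
            refine Finset.sum_le_sum fun t ht => ?_
            obtain ⟨hts, hrt⟩ := Finset.mem_filter.mp ht
            have hj : 1 ≤ t - r := by omega
            have h := hup r hr1 (t - r) hj
            rwa [Nat.add_sub_cancel' hrt.le] at h
        _ ≤ ∑ t ∈ Finset.Icc (r + 1) (n ^ 2), C / ((r:ℝ) * ((t - r : ℕ) : ℝ)) := by
            refine Finset.sum_le_sum_of_subset_of_nonneg ?_ fun t ht _ => ?_
            · intro t ht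
              obtain ⟨hts, hrt⟩ := Finset.mem_filter.mp ht
              exact Finset.mem_Icc.mpr ⟨hrt, (Finset.mem_Icc.mp hts).2⟩
            · have : (0:ℝ) ≤ ((t - r : ℕ) : ℝ) := by positivity
              positivity
        _ = ∑ j ∈ Finset.Icc 1 (n ^ 2 - r), C / ((r:ℝ) * (j : ℝ)) :=
            sum_shift r (n ^ 2) hrb (fun j => C / ((r:ℝ) * (j : ℝ)))
        _ ≤ ∑ j ∈ Finset.Icc 1 (n ^ 2), C / ((r:ℝ) * (j : ℝ)) := by
            refine Finset.sum_le_sum_of_subset_of_nonneg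
              (Finset.Icc_subset_Icc_right (Nat.sub_le _ _)) fun j hj _ => ?_
            have hj1 : 1 ≤ j := (Finset.mem_Icc.mp hj).1
            have hj0 : (0:ℝ) < j := by exact_mod_cast hj1
            positivity
        _ = C / r * T := by
            rw [hTdef, Finset.mul_sum]
            refine Finset.sum_congr rfl fun j _ => ?_
            rw [mul_one_div, div_div]
    calc q = ∑ r ∈ s, ((∑ t ∈ s.filter (fun t => t < r), (P (A r ∩ A t)).toReal) +
            (P (A r ∩ A r)).toReal +
            ∑ t ∈ s.filter (fun t => r < t), (P (A r ∩ A t)).toReal) :=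
          Finset.sum_congr rfl hsplit
      _ = (∑ r ∈ s, ∑ t ∈ s.filter (fun t => t < r), (P (A r ∩ A t)).toReal) +
          (∑ r ∈ s, (P (A r ∩ A r)).toReal) +
          ∑ r ∈ s, ∑ t ∈ s.filter (fun t => r < t), (P (A r ∩ A t)).toReal := by
          rw [Finset.sum_add_distrib, Finset.sum_add_distrib]
      _ = m + 2 * ∑ r ∈ s, ∑ t ∈ s.filter (fun t => r < t), (P (A r ∩ A t)).toReal := by
          rw [hswap, hdiag]; ring
      _ ≤ m + 2 * ∑ r ∈ s, C / r * T := by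
          have h := Finset.sum_le_sum hoff
          linarith
      _ = m + 2 * (C * H * T) := by
          have h1 : ∑ r ∈ s, C / (r:ℝ) = C * H := by
            rw [hHdef, Finset.mul_sum]
            exact Finset.sum_congr rfl fun r _ => by rw [mul_one_div]
          have he : C * H * T = ∑ r ∈ s, C / r * T := by
            rw [← h1, Finset.sum_mul]
          rw [he]
  -- final numeric assembly
  have hPS1 : (P S).toReal ≤ 1 := by
    have h := prob_le_one (μ := P) (s := S)
    have := ENNReal.toReal_mono (by norm_num) h
    simpa using this
  have hm0 : (0:ℝ) < m :=
    lt_of_lt_of_le (mul_pos hc (by linarith : (0:ℝ) < H)) hmge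
  have hq0 : (0:ℝ) < q := by
    have h1 : q * (P S).toReal ≤ q := mul_le_of_le_one_right hqnn hPS1
    nlinarith [pow_pos hm0 2, hkey]
  have hT3H : T ≤ 3 * H := by linarith
  have h2c' : 2 * (c ^ 2 / (16 * C)) ≤ m := by
    have h1 : c ^ 2 / (16 * C) ≤ c / 16 := by
      rw [div_le_div_iff₀ (by positivity) (by norm_num)]
      nlinarith
    have h2 : c ≤ m := le_trans (by nlinarith) hmge
    linarith
  have hp1 : c ^ 2 / (16 * C) * m ≤ m ^ 2 / 2 := by
    nlinarith [mul_nonneg (sub_nonneg.mpr h2c') hm0.le]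
  have hp2 : c ^ 2 / (16 * C) * (2 * (C * H * T)) ≤ m ^ 2 / 2 := by
    have he : c ^ 2 / (16 * C) * (2 * (C * H * T)) = c ^ 2 * H * T / 8 := by
      field_simp; ring
    have h1 : c ^ 2 * H * T ≤ 3 * (c ^ 2 * H ^ 2) := by
      nlinarith [mul_nonneg (mul_nonneg (sq_nonneg c) (by linarith : (0:ℝ) ≤ H))
        (by linarith : (0:ℝ) ≤ 3 * H - T)]
    have h2 : (c * H) ^ 2 ≤ m ^ 2 := by
      have := pow_le_pow_left₀ (by positivity : (0:ℝ) ≤ c * H) hmge 2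
      exact this
    nlinarith
  have hfinal : c ^ 2 / (16 * C) * q ≤ m ^ 2 := by
    have h1 : c ^ 2 / (16 * C) * q ≤ c ^ 2 / (16 * C) * (m + 2 * (C * H * T)) :=
      mul_le_mul_of_nonneg_left hqle (by positivity)
    have h2 : c ^ 2 / (16 * C) * (m + 2 * (C * H * T)) =
        c ^ 2 / (16 * C) * m + c ^ 2 / (16 * C) * (2 * (C * H * T)) := by ring
    linarith
  have h9 : c ^ 2 / (16 * C) * q ≤ (P S).toReal * q := by
    rw [mul_comm ((P S).toReal) q]
    linarith [hkey]
  exact le_of_mul_le_mul_right h9 hq0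
end
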